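/- arXiv:1309.0569 — 3 statements merged into one kernel-verified Lean document; each statement's English description precedes it below -/
import Mathlib

section
/- (Global balance for the product-form distribution.) Let λ_k, μ_k, α_k > 0 and κ_k: ℕ → ℝ₊ for k = 1,…,J, and suppose the traffic equations λ_k = α_k + ∑_{l=1}^J λ_l p_{lk} hold, where (p_{kl}) is a J×J substochastic matrix. Then for any state vector (n_1,…,n_J) ∈ ℕ^J, the algebraic identity holds: ∑_{k=1}^J α_k + ∑_{k=1}^J κ_k(n_k) μ_k = ∑_{k=1}^J (1 - ∑_{l=1}^J p_{kl}) λ_k + ∑_{k=1}^J κ_k(n_k) α_k μ_k / λ_k + ∑_{r,s=1}^J κ_s(n_s) λ_r μ_s p_{rs} / λ_s. -/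
/-- Global balance algebraic identity for the product-form distribution (eq. (26)/(44)). -/
theorem global_balance_identity (J : ℕ) (lam mu α : Fin J → ℝ) (κ : Fin J → ℕ → ℝ)
    (p : Fin J → Fin J → ℝ)
    (hlam : ∀ k, 0 < lam k) (hmu : ∀ k, 0 < mu k) (hα : ∀ k, 0 < α k)
    (hκ : ∀ k n, 0 < κ k n)
    (hp : ∀ k l, 0 ≤ p k l) (hrow : ∀ k, (∑ l, p k l) ≤ 1)
    (htraffic : ∀ k, lam k = α k + ∑ l, lam l * p l k)
    (n : Fin J → ℕ) :
    (∑ k, α k) + (∑ k, κ k (n k) * mu k) =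
      (∑ k, (1 - ∑ l, p k l) * lam k) +
      (∑ k, κ k (n k) * α k * mu k / lam k) +
      (∑ r, ∑ s, κ s (n s) * lam r * mu s * p r s / lam s) := by
  have h1 : (∑ k, (1 - ∑ l, p k l) * lam k) = ∑ k, α k := by
    have : ∑ k, lam k = ∑ k, α k + ∑ k, ∑ l, lam l * p l k := by
      rw [← Finset.sum_add_distrib]
      exact Finset.sum_congr rfl fun k _ => htraffic k
    have hswap : (∑ k, ∑ l, lam l * p l k) = ∑ k, (∑ l, p k l) * lam k := by
      rw [Finset.sum_comm]
      refine Finset.sum_congr rfl fun l _ => ?_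
      rw [Finset.sum_mul]
      exact Finset.sum_congr rfl fun k _ => mul_comm _ _
    calc (∑ k, (1 - ∑ l, p k l) * lam k)
        = ∑ k, lam k - ∑ k, (∑ l, p k l) * lam k := by
          rw [← Finset.sum_sub_distrib]; exact Finset.sum_congr rfl fun k _ => by ring
      _ = ∑ k, α k := by rw [this, hswap]; ring
  have h2 : (∑ k, κ k (n k) * α k * mu k / lam k) +
      (∑ r, ∑ s, κ s (n s) * lam r * mu s * p r s / lam s) = ∑ k, κ k (n k) * mu k := by
    rw [Finset.sum_comm (s := Finset.univ) (t := Finset.univ)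
      (f := fun r s => κ s (n s) * lam r * mu s * p r s / lam s),
      ← Finset.sum_add_distrib]
    refine Finset.sum_congr rfl fun s _ => ?_
    have hls := (hlam s).ne'
    have : (∑ r, κ s (n s) * lam r * mu s * p r s / lam s)
        = κ s (n s) * mu s / lam s * ∑ r, lam r * p r s := by
      rw [Finset.mul_sum]
      exact Finset.sum_congr rfl fun r _ => by field_simp
    rw [this]
    have : α s + ∑ r, lam r * p r s = lam s := (htraffic s).symm
    field_simp
    linear_combination (κ s (n s) * mu s) * this
  rw [h1, add_assoc, h2]
end

section
/- (Net II lower bound for partially saturated states.) Let λ, μ > 0, c a positive integer with λ < cμ, ρ = λ/μ, and let p(n) be the M/M/c stationary distribution. For any integer m with 0 < m < c, ∑_{n=0}^{c-1} min(m, c-n)·p(n) ≥ m·(1 - λ/(cμ)). -/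
/-!
Since `min m (c - n) ≥ (m / c) (c - n)` for `n < c`, the sum is at least `m / c` times the mean
number of idle servers `∑_{n<c} (c - n) p(n)`, and that mean is exactly `c - ρ`: the identity
`n ρⁿ/n! = ρ ρⁿ⁻¹/(n - 1)!` turns `∑_{n<c} (c - n) ρⁿ/n!` into
`(c - ρ) ∑_{n<c} ρⁿ/n! + ρᶜ/(c - 1)!`, and `c - ρ` times the geometric tail of `P₀⁻¹` is
exactly `ρᶜ/(c - 1)!`.
-/

open Finset Nat

section Erlang

variable {K : Type*} [Field K] [CharZero K]

theorem sum_range_succ_mul_pow_div_factorial (x : K) (k : ℕ) :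
    ∑ n ∈ range (k + 1), (n : K) * (x ^ n / n !) = x * ∑ n ∈ range k, x ^ n / n ! := by
  induction k with
  | zero => simp
  | succ k ih =>
    rw [sum_range_succ, ih, sum_range_succ, Nat.factorial_succ]
    push_cast
    field_simp
    ring

/-- `P₀⁻¹` for the M/M/c queue with offered load `x = λ/μ`. -/
def mmcNorm (x : K) (c : ℕ) : K :=
  ∑ n ∈ range c, x ^ n / n ! + x ^ c / (c ! * (1 - x / c))

theorem sum_range_sub_mul_pow_div_factorial {c : ℕ} (hc : 0 < c) {x : K} (hx : x ≠ c) :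
    ∑ n ∈ range c, ((c - n : ℕ) : K) * (x ^ n / n !) = (c - x) * mmcNorm x c := by
  obtain ⟨k, rfl⟩ : ∃ k, c = k + 1 := ⟨c - 1, by omega⟩
  have hsub : ∀ n ∈ range (k + 1), ((k + 1 - n : ℕ) : K) * (x ^ n / n !)
      = (k + 1 : K) * (x ^ n / n !) - n * (x ^ n / n !) := by
    intro n hn
    rw [Nat.cast_sub (mem_range.mp hn).le]
    push_cast
    ring
  have hx' : (k + 1 : K) - x ≠ 0 := sub_ne_zero.mpr (by exact_mod_cast hx.symm)
  rw [sum_congr rfl hsub, sum_sub_distrib, ← mul_sum,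
    sum_range_succ_mul_pow_div_factorial, mmcNorm, sum_range_succ, Nat.factorial_succ]
  push_cast
  rw [show (1 : K) - x / (k + 1) = ((k + 1) - x) / (k + 1) by field_simp]
  field_simp
  ring

end Erlang

theorem mmcNorm_pos {x : ℝ} {c : ℕ} (hc : 0 < c) (hx₀ : 0 ≤ x) (hxc : x < c) :
    0 < mmcNorm x c := by
  have hload : 0 < 1 - x / c := sub_pos.mpr ((div_lt_one (by exact_mod_cast hc)).mpr hxc)
  exact add_pos_of_pos_of_nonneg
    (sum_pos' (fun n _ => by positivity) ⟨0, mem_range.mpr hc, by simp⟩) (by positivity)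

theorem Nat.mul_le_mul_min {a b c : ℕ} (ha : a ≤ c) (hb : b ≤ c) : a * b ≤ c * min a b := by
  rcases le_total a b with h | h
  · rw [min_eq_left h, mul_comm c]; exact Nat.mul_le_mul_left a hb
  · rw [min_eq_right h]; exact Nat.mul_le_mul_right b ha

theorem net_two_kappa_lower_bound_general (lam mu : ℝ) (c : ℕ)
    (hlam : 0 < lam) (hmu : 0 < mu) (hstab : lam < c * mu)
    (P0 : ℝ)
    (hP0 : P0 = ((∑ n ∈ Finset.range c, (lam / mu) ^ n / (Nat.factorial n : ℝ)) +
        (lam / mu) ^ c / ((Nat.factorial c : ℝ) * (1 - lam / (c * mu))))⁻¹)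
    (p : ℕ → ℝ)
    (hp : ∀ n, p n = if n < c then P0 * (lam / mu) ^ n / (Nat.factorial n : ℝ)
        else P0 * (lam / mu) ^ n / ((Nat.factorial c : ℝ) * (c : ℝ) ^ (n - c)))
    (m : ℕ) (hmc : m < c) :
    (m : ℝ) * (1 - lam / (c * mu)) ≤
      ∑ n ∈ Finset.range c, (min m (c - n) : ℕ) * p n := by
  set ρ := lam / mu
  have hc : 0 < c := by omega
  have hρc : ρ < c := (div_lt_iff₀ hmu).mpr hstab
  have hload : lam / (c * mu) = ρ / c := by rw [mul_comm, div_div]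
  have hnorm : 0 < mmcNorm ρ c := mmcNorm_pos hc (by positivity) hρc
  have hP0' : P0 = (mmcNorm ρ c)⁻¹ := by rw [hP0, hload, mmcNorm]
  have hp_lt : ∀ n ∈ range c, p n = P0 * (ρ ^ n / n !) := fun n hn => by
    rw [hp n, if_pos (mem_range.mp hn), mul_div_assoc]
  have hidle : ∑ n ∈ range c, ((c - n : ℕ) : ℝ) * p n = c - ρ := by
    rw [sum_congr rfl fun n hn => by rw [hp_lt n hn, mul_left_comm], ← mul_sum,
      sum_range_sub_mul_pow_div_factorial hc hρc.ne, hP0']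
    field_simp
  calc (m : ℝ) * (1 - lam / (c * mu))
      = ∑ n ∈ range c, (m / c * ((c - n : ℕ) : ℝ)) * p n := by
        simp_rw [mul_assoc, ← mul_sum, hidle, hload]
        field_simp
    _ ≤ ∑ n ∈ range c, (min m (c - n) : ℕ) * p n := by
        refine sum_le_sum fun n hn => mul_le_mul_of_nonneg_right ?_ ?_
        · rw [div_mul_eq_mul_div, div_le_iff₀ (by exact_mod_cast hc), mul_comm _ (c : ℝ)]
          exact_mod_cast Nat.mul_le_mul_min hmc.le (Nat.sub_le c n)
        · rw [hp_lt n hn, hP0']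
          positivity

/-- Net II lower bound for partially saturated states: for `0 < m < c`,
`∑_{n<c} min(m, c−n) p(n) ≥ m (1 − λ/(cμ))`. -/
theorem net_two_kappa_lower_bound (lam mu : ℝ) (c : ℕ)
    (hlam : 0 < lam) (hmu : 0 < mu) (hc : 0 < c) (hstab : lam < c * mu)
    (P0 : ℝ)
    (hP0 : P0 = ((∑ n ∈ Finset.range c, (lam / mu) ^ n / (Nat.factorial n : ℝ)) +
        (lam / mu) ^ c / ((Nat.factorial c : ℝ) * (1 - lam / (c * mu))))⁻¹)
    (p : ℕ → ℝ)
    (hp : ∀ n, p n = if n < c then P0 * (lam / mu) ^ n / (Nat.factorial n : ℝ)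
        else P0 * (lam / mu) ^ n / ((Nat.factorial c : ℝ) * (c : ℝ) ^ (n - c)))
    (m : ℕ) (hm0 : 0 < m) (hmc : m < c) :
    (m : ℝ) * (1 - lam / (c * mu)) ≤
      ∑ n ∈ Finset.range c, (min m (c - n) : ℕ) * p n :=
  net_two_kappa_lower_bound_general lam mu c hlam hmu hstab P0 hP0 p hp m hmc
end

section
/- (Example 1 stability bound.) With the notation of the previous statement, if additionally λ₁/μ₁ ≤ 1 and λ₃/(2μ₃) satisfies λ₁/(2μ₁) + λ₂/(2μ₂) + λ₃/(2μ₃) < 1, then λ₃/(κ₃(n)μ₃) ≤ λ₃/(2(1 - λ₁/(2μ₁) - λ₂/(2μ₂))μ₃) < 1 for all n ≥ 2; in particular κ₃(n) ≥ 2(1 - λ₁/(2μ₁) - λ₂/(2μ₂)). -/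
/-- Example 1 stability bound: with `λ₁/μ₁ ≤ 1` and total load less than one,
`κ₃ ≥ 2(1 − λ₁/(2μ₁) − λ₂/(2μ₂))` and hence
`λ₃/(κ₃ μ₃) ≤ λ₃/(2(1 − λ₁/(2μ₁) − λ₂/(2μ₂))μ₃) < 1`. -/
theorem example_one_stability_bound (lam1 mu1 lam2 mu2 lam3 mu3 : ℝ)
    (hlam1 : 0 < lam1) (hmu1 : 0 < mu1) (hlam2 : 0 < lam2) (hmu2 : 0 < mu2)
    (hlam3 : 0 < lam3) (hmu3 : 0 < mu3)
    (hload1 : lam1 / mu1 ≤ 1)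
    (hρ : lam1 / (2 * mu1) + lam2 / (2 * mu2) + lam3 / (2 * mu3) < 1)
    (κ3 : ℝ)
    (hκ3 : κ3 = 2 * (1 - lam1 / (2 * mu1) - lam2 / (2 * mu2)) *
        (1 + lam1 / mu1 + lam2 / (2 * mu2) - (lam1 / (2 * mu1)) ^ 2
          - (1 / 4) * (lam1 / mu1) ^ 3
          + 2 * (1 - lam1 / (2 * mu1)) * (lam1 * lam2 / (4 * mu1 * mu2))) /
      (1 + lam1 / mu1 + lam2 / (2 * mu2) - (lam1 / (2 * mu1)) ^ 2
          - (1 / 4) * (lam1 / mu1) ^ 3 + lam1 * lam2 / (4 * mu1 * mu2))) :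
    2 * (1 - lam1 / (2 * mu1) - lam2 / (2 * mu2)) ≤ κ3 ∧
    lam3 / (κ3 * mu3) ≤
      lam3 / (2 * (1 - lam1 / (2 * mu1) - lam2 / (2 * mu2)) * mu3) ∧
    lam3 / (2 * (1 - lam1 / (2 * mu1) - lam2 / (2 * mu2)) * mu3) < 1 := by
  set A := lam1 / mu1 with hA
  set B := lam2 / (2 * mu2) with hB
  have hApos : 0 < A := div_pos hlam1 hmu1
  have hBpos : 0 < B := div_pos hlam2 (by positivity)
  have h1 : lam1 / (2 * mu1) = A / 2 := by
    rw [hA, div_div, mul_comm]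
  have h2 : lam1 * lam2 / (4 * mu1 * mu2) = A * B / 2 := by
    rw [hA, hB]; field_simp; ring
  have hC3 : lam3 / (2 * mu3) < 1 - A / 2 - B := by
    rw [← h1] at *; linarith
  have hcpos : 0 < 2 * (1 - A / 2 - B) := by
    have : 0 < lam3 / (2 * mu3) := by positivity
    linarith
  rw [h1, h2] at hκ3
  have hDpos : 0 < 1 + A + B - (A / 2) ^ 2 - (1 / 4) * A ^ 3 + A * B / 2 := by
    nlinarith [hApos, hBpos, hload1, sq_nonneg A, mul_pos hApos hBpos]
  have hND : 1 + A + B - (A / 2) ^ 2 - (1 / 4) * A ^ 3 + A * B / 2 ≤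
      1 + A + B - (A / 2) ^ 2 - (1 / 4) * A ^ 3 + 2 * (1 - A / 2) * (A * B / 2) := by
    nlinarith [mul_pos hApos hBpos, hload1]
  have hκge : 2 * (1 - A / 2 - B) ≤ κ3 := by
    rw [hκ3, le_div_iff₀ hDpos]
    nlinarith [mul_pos hApos hBpos, hload1, hcpos, hND]
  rw [h1]
  refine ⟨hκge, ?_, ?_⟩
  · have h3 : 2 * (1 - A / 2 - B) * mu3 ≤ κ3 * mu3 :=
      mul_le_mul_of_nonneg_right hκge hmu3.le
    exact div_le_div_of_nonneg_left hlam3.le (by positivity) h3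
  · rw [div_lt_one (by positivity)]
    rw [div_lt_iff₀ (by positivity)] at hC3
    nlinarith [hmu3]
end
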